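/- arXiv:1911.03259 — 2 statements merged into one kernel-verified Lean document; each statement's English description precedes it below -/
import Mathlib

section
/- The sum over all partitions λ with at most n parts of the dual Grothendieck polynomials g_λ(z_1,…,z_m) equals ∏_{i=1}^m (1 − z_i)^{−n}, as formal power series. -/
open scoped BigOperators

/-- A plane partition: a finitely supported `ℕ`-array (0-indexed) weakly
decreasing along rows and columns. -/
structure PlanePartition where
  entry : ℕ → ℕ → ℕ
  row_decr : ∀ i j, entry i (j + 1) ≤ entry i j
  col_decr : ∀ i j, entry (i + 1) j ≤ entry i j
  finite_support : {p : ℕ × ℕ | entry p.1 p.2 ≠ 0}.Finite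

namespace PlanePartition

/-- `π` has at most `n` (nonzero) rows. -/
def RowsLE (π : PlanePartition) (n : ℕ) : Prop := ∀ i j, n ≤ i → π.entry i j = 0

/-- `π` has at most `k` (nonzero) columns. -/
def ColsLE (π : PlanePartition) (k : ℕ) : Prop := ∀ i j, k ≤ j → π.entry i j = 0

/-- all entries of `π` are at most `m`. -/
def EntriesLE (π : PlanePartition) (m : ℕ) : Prop := ∀ i j, π.entry i j ≤ m

/-- The descent set of `π` (0-indexed cells). -/
def Des (π : PlanePartition) : Set (ℕ × ℕ) :=
  {p | π.entry (p.1 + 1) p.2 < π.entry p.1 p.2}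

/-- number of descents of `π`. -/
noncomputable def des (π : PlanePartition) : ℕ := π.Des.ncard

/-- `dmat π i ℓ` is the matrix entry `d_{i+1, ℓ+1}` of `Φ(π)`: the number of columns `j`
with `π_{ij} = ℓ+1 > π_{i+1,j}` (here `i`, `ℓ` are 0-indexed). -/
noncomputable def dmat (π : PlanePartition) (i ℓ : ℕ) : ℕ :=
  {j : ℕ | π.entry i j = ℓ + 1 ∧ π.entry (i + 1) j ≤ ℓ}.ncard

/-- the volume `|π|`. -/
noncomputable def vol (π : PlanePartition) : ℕ := ∑ᶠ p : ℕ × ℕ, π.entry p.1 p.2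

/-- the up-hook volume `|π|_{uh} = Σ_{(i,j) ∈ Des(π)} (π_{ij} + i - 1)` (1-indexed `i`;
in our 0-indexed convention the summand is `π.entry p.1 p.2 + p.1`). -/
noncomputable def uhvol (π : PlanePartition) : ℕ :=
  ∑ᶠ p ∈ π.Des, (π.entry p.1 p.2 + p.1)

/-- the corner volume `|π|_c = Σ_{(i,j) ∈ Des(π)} π_{ij}`. -/
noncomputable def cvol (π : PlanePartition) : ℕ :=
  ∑ᶠ p ∈ π.Des, π.entry p.1 p.2

/-- the trace `tr(π) = Σ_i π_{ii}`. -/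
noncomputable def trace (π : PlanePartition) : ℕ := ∑ᶠ i : ℕ, π.entry i i

/-- `colCount π v` is the number of columns of `π` containing the entry `v`. -/
noncomputable def colCount (π : PlanePartition) (v : ℕ) : ℕ :=
  {j : ℕ | ∃ i, π.entry i j = v}.ncard

/-- the length of row `i` (0-indexed) of `π`. -/
noncomputable def rowLen (π : PlanePartition) (i : ℕ) : ℕ :=
  {j : ℕ | π.entry i j ≠ 0}.ncard

/-- `π` is column-strict: entries strictly decrease down the columns (within the shape). -/
def ColStrict (π : PlanePartition) : Prop :=
  ∀ i j, π.entry i j ≠ 0 → π.entry (i + 1) j < π.entry i j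

/-- the shape of `π` is exactly the rectangle with `n` rows and `k` columns. -/
def ShapeRect (π : PlanePartition) (k n : ℕ) : Prop :=
  ∀ i j, π.entry i j ≠ 0 ↔ i < n ∧ j < k

end PlanePartition

/-- The Schur polynomial `s_{(k^n)}` of rectangular shape `(k^n)` in `N` variables
`x 0, …, x (N-1)`, defined via column-strict plane partitions of shape `(k^n)` with
entries at most `N`; the variable `x i` records entries equal to `i + 1`. -/
noncomputable def schurRect {R : Type*} [CommSemiring R] (k n N : ℕ) (x : ℕ → R) : R :=
  ∑ᶠ π ∈ {π : PlanePartition | π.ColStrict ∧ π.ShapeRect k n ∧ π.EntriesLE N},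
    ∏ i ∈ Finset.range N, x i ^ ({p : ℕ × ℕ | π.entry p.1 p.2 = i + 1}.ncard)

/-!
The paper's bijection `Φ` identifies a plane partition `π` with at most `n` rows and entries at
most `m` with an arbitrary `n × m` matrix of natural numbers: `dmat π i j` counts the columns
whose lowest entry `j + 1` lies in row `i`. If `μ i j` is the length of row `i` of the level set
`{π > j}`, the columns counted by `dmat π i j` form the interval
`[max (μ (i + 1) j) (μ i (j + 1)), μ i j)`, so
`μ i j = max (μ (i + 1) j) (μ i (j + 1)) + dmat π i j`;
solved from the corner `(n, m)` backwards, this recursion rebuilds `π` from any matrix.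
The number of columns containing `j + 1` is the `j`-th column sum of the matrix, so the plane
partitions in question are counted by `∏ j, multichoose n (e j)`, which is the coefficient of
`z ^ e` in `∏ j, (1 - z j) ^ (-n)`.
-/

theorem Set.Finite.eq_Iio_ncard {s : Set ℕ} (hs : s.Finite) (h : IsLowerSet s) :
    s = Set.Iio s.ncard := by
  obtain h | ⟨a, rfl⟩ := h.eq_univ_or_Iio
  · exact absurd (h ▸ hs) Set.infinite_univ
  · rw [Set.ncard_Iio_nat]

theorem Nat.lt_ncard_setOf_iff {P : ℕ → Prop} (hP : Antitone P) (hfin : {c | P c}.Finite)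
    (c : ℕ) : c < {c | P c}.ncard ↔ P c :=
  (Set.ext_iff.mp (hfin.eq_Iio_ncard (isLowerSet_setOfPred.mpr hP)) c).symm

theorem Nat.card_subtype_colSum_eq {ι κ : Type*} [Fintype ι] [Fintype κ] (e : κ → ℕ) :
    Nat.card {d : ι → κ → ℕ // ∀ j, ∑ i, d i j = e j} =
      ∏ j, (Fintype.card ι).multichoose (e j) := by
  classical
  let E : {d : ι → κ → ℕ // ∀ j, ∑ i, d i j = e j} ≃ ∀ j, {x : ι → ℕ // ∑ i, x i = e j} :=
    ((Equiv.piComm fun _ _ => ℕ).subtypeEquiv fun _ => Iff.rfl).trans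
      (Equiv.subtypePiEquivPi (p := fun j x => ∑ i, x i = e j))
  rw [Nat.card_congr E, Nat.card_pi]
  refine Finset.prod_congr rfl fun j _ => ?_
  rw [← Nat.card_congr (Sym.equivNatSumOfFintype ι (e j)), Nat.card_eq_fintype_card,
    Sym.card_sym_eq_multichoose]

theorem PowerSeries.coeff_invOneSubPow (S : Type*) [CommRing S] (n k : ℕ) :
    coeff k (invOneSubPow S n : PowerSeries S) = n.multichoose k := by
  cases n with
  | zero => cases k <;> simp [invOneSubPow_zero, coeff_one]
  | succ d =>
    rw [invOneSubPow_val_succ_eq_mk_add_choose, coeff_mk, Nat.multichoose_eq,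
      show d + 1 + k - 1 = d + k by omega, Nat.choose_symm_add]

namespace MvPowerSeries

variable {σ R : Type*} [CommSemiring R]

theorem coeff_single_rename_punit (j : σ) (k : ℕ) (p : PowerSeries R) :
    coeff (Finsupp.single j k) (rename (Function.Embedding.punit j) p) = PowerSeries.coeff k p :=
  (Finsupp.embDomain_single (Function.Embedding.punit j) () k) ▸ coeff_embDomain_rename _ p _

theorem coeff_prod_rename_punit [Fintype σ] [DecidableEq σ] (f : σ → PowerSeries R)
    (e : σ →₀ ℕ) :
    coeff e (∏ j, rename (Function.Embedding.punit j) (f j)) =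
      ∏ j, PowerSeries.coeff (e j) (f j) := by
  rw [coeff_prod, Finset.sum_eq_single_of_mem
    (Finsupp.equivFunOnFinite.symm fun j => Finsupp.single j (e j))]
  · simp only [Finsupp.equivFunOnFinite_symm_apply_apply, coeff_single_rename_punit]
  · simp [Finset.mem_finsuppAntidiag]
  · -- `rename (punit j) _` is supported on the monomials in `X j` alone.
    intro l hl hne
    obtain ⟨j, hj⟩ : ∃ j, l j ∉ Set.range (Finsupp.mapDomain (Function.Embedding.punit j)) := by
      by_contra! hpure
      choose x hx using hpure
      have hlx (j : σ) : l j = Finsupp.single j (x j ()) := by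
        rw [← hx]
        conv_lhs => rw [Finsupp.unique_single (x j), Finsupp.mapDomain_single]
        rfl
      refine hne (Finsupp.ext fun j => ?_)
      have hsum := DFunLike.congr_fun (Finset.mem_finsuppAntidiag.mp hl).1 j
      simp only [hlx, Finsupp.coe_finsetSum, Finset.sum_apply, Finsupp.single_apply,
        Finset.sum_ite_eq', Finset.mem_univ, ↓reduceIte] at hsum
      simp [hlx, hsum]
    exact Finset.prod_eq_zero (Finset.mem_univ j) (coeff_rename_eq_zero _ _ hj)

theorem inv_one_sub_X_pow_eq_rename {K : Type*} [Field K] (j : σ) (n : ℕ) :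
    ((1 - X j : MvPowerSeries σ K)⁻¹) ^ n =
      rename (Function.Embedding.punit j) (PowerSeries.invOneSubPow K n : PowerSeries K) := by
  have hc : constantCoeff ((1 - X j : MvPowerSeries σ K) ^ n) ≠ 0 := by simp
  have hX : rename (Function.Embedding.punit j) (1 - PowerSeries.X : PowerSeries K) = 1 - X j := by
    rw [map_sub, map_one]
    exact congrArg (1 - ·) (rename_X (R := K) (Function.Embedding.punit j) ())
  refine ((MvPowerSeries.eq_inv_iff_mul_eq_one hc).mpr ?_).trans
    ((MvPowerSeries.eq_inv_iff_mul_eq_one hc).mpr ?_).symm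
  · rw [← mul_pow, MvPowerSeries.inv_mul_cancel _ (by simp), one_pow]
  · rw [← hX, ← map_pow, ← map_mul, ← PowerSeries.invOneSubPow_inv_eq_one_sub_pow,
      Units.val_inv, map_one]

theorem coeff_prod_inv_one_sub_X_pow {K : Type*} [Fintype σ] [DecidableEq σ] [Field K] (n : ℕ)
    (e : σ →₀ ℕ) :
    coeff e (∏ j, ((1 - X j : MvPowerSeries σ K)⁻¹) ^ n) = ∏ j, (n.multichoose (e j) : K) := by
  simp_rw [inv_one_sub_X_pow_eq_rename, coeff_prod_rename_punit, PowerSeries.coeff_invOneSubPow]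

end MvPowerSeries

namespace PlanePartition

variable (π : PlanePartition)

theorem entry_injective : Function.Injective PlanePartition.entry := by
  rintro ⟨⟩ ⟨⟩ rfl
  rfl

theorem antitone_entry (i : ℕ) : Antitone (π.entry i) :=
  antitone_nat_of_succ_le (π.row_decr i)

theorem antitone_entry_col (c : ℕ) : Antitone (π.entry · c) :=
  antitone_nat_of_succ_le (π.col_decr · c)

theorem finite_entry_ne_zero (i : ℕ) : {c | π.entry i c ≠ 0}.Finite :=
  π.finite_support.preimage (Prod.mk_right_injective i).injOn

noncomputable def rowLenGT (i j : ℕ) : ℕ := {c | j < π.entry i c}.ncard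

theorem lt_rowLenGT_iff {i j c : ℕ} : c < π.rowLenGT i j ↔ j < π.entry i c :=
  Nat.lt_ncard_setOf_iff (fun _ _ h hlt => lt_of_lt_of_le hlt (π.antitone_entry i h))
    ((π.finite_entry_ne_zero i).subset fun _ h => by simp at h ⊢; omega) c

theorem rowLenGT_succ_left_le (i j : ℕ) : π.rowLenGT (i + 1) j ≤ π.rowLenGT i j :=
  le_of_forall_lt fun c hc => π.lt_rowLenGT_iff.mpr <|
    lt_of_lt_of_le (π.lt_rowLenGT_iff.mp hc) (π.col_decr i c)

theorem rowLenGT_succ_right_le (i j : ℕ) : π.rowLenGT i (j + 1) ≤ π.rowLenGT i j :=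
  le_of_forall_lt fun _ hc => π.lt_rowLenGT_iff.mpr <|
    Nat.lt_of_succ_lt (π.lt_rowLenGT_iff.mp hc)

theorem rowLenGT_eq_zero {n m : ℕ} (hn : π.RowsLE n) (hm : π.EntriesLE m) {i j : ℕ}
    (h : ¬(i < n ∧ j < m)) : π.rowLenGT i j = 0 := by
  refine Nat.eq_zero_of_not_pos fun hpos => ?_
  have hj : j < π.entry i 0 := π.lt_rowLenGT_iff.mp hpos
  by_cases hi : i < n
  · have := hm i 0
    omega
  · rw [hn i 0 (not_lt.mp hi)] at hj
    exact Nat.not_lt_zero _ hj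

/-- The cells of row `i` counted by `dmat π i j` form an interval of columns. -/
theorem dmat_eq (i j : ℕ) :
    π.dmat i j = π.rowLenGT i j - max (π.rowLenGT (i + 1) j) (π.rowLenGT i (j + 1)) := by
  have : {c | π.entry i c = j + 1 ∧ π.entry (i + 1) c ≤ j} =
      Set.Ico (max (π.rowLenGT (i + 1) j) (π.rowLenGT i (j + 1))) (π.rowLenGT i j) := by
    ext c
    have h₁ := π.lt_rowLenGT_iff (i := i) (j := j) (c := c)
    have h₂ := π.lt_rowLenGT_iff (i := i + 1) (j := j) (c := c)
    have h₃ := π.lt_rowLenGT_iff (i := i) (j := j + 1) (c := c)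
    simp only [Set.mem_ofPred_eq, Set.mem_Ico, max_le_iff]
    omega
  rw [dmat, this, Set.ncard_eq_toFinset_card', Set.toFinset_Ico, Nat.card_Ico]

theorem rowLenGT_eq_max_add_dmat (i j : ℕ) :
    π.rowLenGT i j = max (π.rowLenGT (i + 1) j) (π.rowLenGT i (j + 1)) + π.dmat i j := by
  have := max_le (π.rowLenGT_succ_left_le i j) (π.rowLenGT_succ_right_le i j)
  rw [dmat_eq]
  omega

/-- A column contains the value `j + 1` iff some row `i` is the lowest one holding it. -/
theorem colCount_succ_eq_sum_dmat {n : ℕ} (hn : π.RowsLE n) (j : ℕ) :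
    π.colCount (j + 1) = ∑ i : Fin n, π.dmat i j := by
  classical
  let D (i : Fin n) : Set ℕ := {c | π.entry i c = j + 1 ∧ π.entry (i + 1) c ≤ j}
  have hunion : {c | ∃ i, π.entry i c = j + 1} = ⋃ i, D i := by
    ext c
    simp only [D, Set.mem_ofPred_eq, Set.mem_iUnion]
    constructor
    · rintro ⟨i₀, hi₀⟩
      have hi₀n : i₀ ≤ n := le_of_lt <| not_le.mp fun h => by simp [hn i₀ c h] at hi₀
      set i := Nat.findGreatest (fun i => π.entry i c = j + 1) n
      have hi : π.entry i c = j + 1 :=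
        Nat.findGreatest_spec (P := fun i => π.entry i c = j + 1) hi₀n hi₀
      have hin : i < n := not_le.mp fun h => by simp [hn i c h] at hi
      refine ⟨⟨i, hin⟩, hi, ?_⟩
      have hnext : π.entry (i + 1) c ≠ j + 1 :=
        Nat.findGreatest_is_greatest (P := fun i => π.entry i c = j + 1) i.lt_succ_self hin
      have := π.col_decr i c
      show π.entry (i + 1) c ≤ j
      omega
    · rintro ⟨i, hi, -⟩
      exact ⟨i, hi⟩
  have hdisj : Pairwise (Function.onFun Disjoint D) := by
    intro i i' hne
    refine Set.disjoint_left.mpr fun c ⟨hi, hi_low⟩ ⟨hi', hi'_low⟩ => ?_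
    rcases lt_or_gt_of_ne (Fin.val_ne_of_ne hne) with h | h
    · have : π.entry i' c ≤ π.entry (i + 1) c := π.antitone_entry_col c h
      omega
    · have : π.entry i c ≤ π.entry (i' + 1) c := π.antitone_entry_col c h
      omega
  have hfin (i : Fin n) : (D i).Finite :=
    (π.finite_entry_ne_zero i).subset fun c h => by simp [D] at h ⊢; omega
  rw [colCount, hunion, Set.ncard_iUnion_of_finite hfin hdisj, finsum_eq_sum_of_fintype]
  rfl

variable {n m : ℕ} (d : Fin n → Fin m → ℕ)

noncomputable def rowLenOfMatrix (i j : ℕ) : ℕ :=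
  if h : i < n ∧ j < m then
    max (rowLenOfMatrix (i + 1) j) (rowLenOfMatrix i (j + 1)) + d ⟨i, h.1⟩ ⟨j, h.2⟩
  else 0
termination_by (n - i) + (m - j)

theorem rowLenOfMatrix_eq {i j : ℕ} (h : i < n ∧ j < m) :
    rowLenOfMatrix d i j =
      max (rowLenOfMatrix d (i + 1) j) (rowLenOfMatrix d i (j + 1)) + d ⟨i, h.1⟩ ⟨j, h.2⟩ := by
  rw [rowLenOfMatrix, dif_pos h]

theorem rowLenOfMatrix_eq_zero {i j : ℕ} (h : ¬(i < n ∧ j < m)) : rowLenOfMatrix d i j = 0 := by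
  rw [rowLenOfMatrix, dif_neg h]

theorem lt_and_lt_of_lt_rowLenOfMatrix {i j c : ℕ} (h : c < rowLenOfMatrix d i j) :
    i < n ∧ j < m := by
  by_contra hij
  rw [rowLenOfMatrix_eq_zero d hij] at h
  exact Nat.not_lt_zero _ h

theorem rowLenOfMatrix_unique {ν : ℕ → ℕ → ℕ} (hν₀ : ∀ i j, ¬(i < n ∧ j < m) → ν i j = 0)
    (hν : ∀ i j (h : i < n ∧ j < m),
      ν i j = max (ν (i + 1) j) (ν i (j + 1)) + d ⟨i, h.1⟩ ⟨j, h.2⟩) :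
    rowLenOfMatrix d = ν := by
  funext i j
  induction i, j using rowLenOfMatrix.induct with
  | case1 i j h ih₁ ih₂ => rw [rowLenOfMatrix_eq d h, ih₁, ih₂, hν i j h]
  | case2 i j h => rw [rowLenOfMatrix_eq_zero d h, hν₀ i j h]

theorem rowLenOfMatrix_succ_left_le (i j : ℕ) :
    rowLenOfMatrix d (i + 1) j ≤ rowLenOfMatrix d i j := by
  by_cases h : i < n ∧ j < m
  · rw [rowLenOfMatrix_eq d h]
    exact le_add_right (le_max_left _ _)
  · rw [rowLenOfMatrix_eq_zero d (by omega)]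
    exact Nat.zero_le _

theorem rowLenOfMatrix_succ_right_le (i j : ℕ) :
    rowLenOfMatrix d i (j + 1) ≤ rowLenOfMatrix d i j := by
  by_cases h : i < n ∧ j < m
  · rw [rowLenOfMatrix_eq d h]
    exact le_add_right (le_max_right _ _)
  · rw [rowLenOfMatrix_eq_zero d (by omega)]
    exact Nat.zero_le _

theorem antitone_rowLenOfMatrix_left (j : ℕ) : Antitone (rowLenOfMatrix d · j) :=
  antitone_nat_of_succ_le (rowLenOfMatrix_succ_left_le d · j)

theorem antitone_rowLenOfMatrix_right (i : ℕ) : Antitone (rowLenOfMatrix d i) :=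
  antitone_nat_of_succ_le (rowLenOfMatrix_succ_right_le d i)

theorem finite_lt_rowLenOfMatrix (i c : ℕ) : {j | c < rowLenOfMatrix d i j}.Finite :=
  (Set.finite_Iio m).subset fun _ hj => (lt_and_lt_of_lt_rowLenOfMatrix d hj).2

theorem lt_ncard_lt_rowLenOfMatrix_iff {i j c : ℕ} :
    j < {j | c < rowLenOfMatrix d i j}.ncard ↔ c < rowLenOfMatrix d i j :=
  Nat.lt_ncard_setOf_iff
    (fun _ _ h hlt => lt_of_lt_of_le hlt (antitone_rowLenOfMatrix_right d i h))
    (finite_lt_rowLenOfMatrix d i c) j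

noncomputable def ofMatrix : PlanePartition where
  entry i c := {j | c < rowLenOfMatrix d i j}.ncard
  row_decr i c :=
    Set.ncard_le_ncard (fun _ hj => Nat.lt_of_succ_lt hj) (finite_lt_rowLenOfMatrix d i c)
  col_decr i c :=
    Set.ncard_le_ncard (fun _ hj => lt_of_lt_of_le hj (rowLenOfMatrix_succ_left_le d i _))
      (finite_lt_rowLenOfMatrix d i c)
  finite_support := by
    refine ((Set.finite_Iio n).prod (Set.finite_Iio (rowLenOfMatrix d 0 0))).subset ?_
    rintro ⟨i, c⟩ hic
    have hc : c < rowLenOfMatrix d i 0 :=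
      (lt_ncard_lt_rowLenOfMatrix_iff d).mp (Nat.pos_of_ne_zero hic)
    exact ⟨(lt_and_lt_of_lt_rowLenOfMatrix d hc).1,
      lt_of_lt_of_le hc (antitone_rowLenOfMatrix_left d 0 (Nat.zero_le i))⟩

theorem rowsLE_ofMatrix : (ofMatrix d).RowsLE n := fun _ _ hi =>
  Nat.eq_zero_of_not_pos fun h =>
    (lt_and_lt_of_lt_rowLenOfMatrix d ((lt_ncard_lt_rowLenOfMatrix_iff d).mp h)).1.not_ge hi

theorem entriesLE_ofMatrix : (ofMatrix d).EntriesLE m := fun _ _ =>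
  not_lt.mp fun h =>
    (lt_and_lt_of_lt_rowLenOfMatrix d ((lt_ncard_lt_rowLenOfMatrix_iff d).mp h)).2.false

theorem rowLenGT_ofMatrix : (ofMatrix d).rowLenGT = rowLenOfMatrix d := by
  funext i j
  exact eq_of_forall_lt_iff fun _ =>
    (ofMatrix d).lt_rowLenGT_iff.trans (lt_ncard_lt_rowLenOfMatrix_iff d)

theorem dmat_ofMatrix (i : Fin n) (j : Fin m) : (ofMatrix d).dmat i j = d i j := by
  rw [dmat_eq, rowLenGT_ofMatrix, rowLenOfMatrix_eq d ⟨i.2, j.2⟩, Fin.eta, Fin.eta]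
  omega

theorem ofMatrix_dmat {π : PlanePartition} (hn : π.RowsLE n) (hm : π.EntriesLE m) :
    ofMatrix (fun (i : Fin n) (j : Fin m) => π.dmat i j) = π := by
  have hlen : rowLenOfMatrix (fun (i : Fin n) (j : Fin m) => π.dmat i j) = π.rowLenGT :=
    rowLenOfMatrix_unique _ (fun i j h => π.rowLenGT_eq_zero hn hm h)
      (fun i j _ => π.rowLenGT_eq_max_add_dmat i j)
  apply entry_injective
  funext i c
  exact eq_of_forall_lt_iff fun _ =>
    (lt_ncard_lt_rowLenOfMatrix_iff _).trans (by rw [hlen, lt_rowLenGT_iff])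

noncomputable def equivMatrix (n m : ℕ) :
    {π : PlanePartition // π.RowsLE n ∧ π.EntriesLE m} ≃ (Fin n → Fin m → ℕ) where
  toFun π i j := π.1.dmat i j
  invFun d := ⟨ofMatrix d, rowsLE_ofMatrix d, entriesLE_ofMatrix d⟩
  left_inv π := Subtype.ext (ofMatrix_dmat π.2.1 π.2.2)
  right_inv d := funext₂ (dmat_ofMatrix d)

theorem card_colCount_eq (n m : ℕ) (e : Fin m → ℕ) :
    Nat.card {π : PlanePartition // π.RowsLE n ∧ π.EntriesLE m ∧
      ∀ j : Fin m, π.colCount ((j : ℕ) + 1) = e j} = ∏ j, n.multichoose (e j) := by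
  let E : {π : PlanePartition // π.RowsLE n ∧ π.EntriesLE m ∧
      ∀ j : Fin m, π.colCount ((j : ℕ) + 1) = e j} ≃
      {d : Fin n → Fin m → ℕ // ∀ j, ∑ i, d i j = e j} :=
    (Equiv.subtypeEquivRight fun _ => and_assoc.symm).trans <|
      (Equiv.subtypeSubtypeEquivSubtypeInter _ _).symm.trans <|
        (equivMatrix n m).subtypeEquiv fun π => by
          simp [equivMatrix, colCount_succ_eq_sum_dmat π.1 π.2.1]
  rw [Nat.card_congr E, Nat.card_subtype_colSum_eq, Fintype.card_fin]

end PlanePartition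

/-- Coefficient-wise: summing `g_λ` over all `λ` with at most `n` parts amounts to summing
`∏ j, z_j ^ c_j(π)` over all plane partitions `π` with at most `n` rows and entries at most `m`. -/
theorem sum_groth_gen_fun (n m : ℕ) (e : Fin m →₀ ℕ) :
    MvPowerSeries.coeff e
      (∏ j : Fin m, ((1 - MvPowerSeries.X j : MvPowerSeries (Fin m) ℚ)⁻¹) ^ n) =
    Nat.card {π : PlanePartition // π.RowsLE n ∧ π.EntriesLE m ∧
      ∀ j : Fin m, π.colCount ((j : ℕ) + 1) = e j} := by
  rw [MvPowerSeries.coeff_prod_inv_one_sub_X_pow, PlanePartition.card_colCount_eq, Nat.cast_prod]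
end

section
/- There is an explicit bijection between the set of words of length n over the alphabet {1,…,m} and the disjoint union over λ ⊆ (n^m) of the sets ST(λ, n) of strict tableaux of shape λ with filling [n]. -/
open scoped BigOperators

/-- `π` is a strict tableau with filling `[n]` and shape contained in the rectangle
with `m` rows and `n` columns: entries lie in `{1, …, n}` and each `v ∈ [n]` appears
in exactly one column. -/
def IsStrictTableau (π : PlanePartition) (n m : ℕ) : Prop :=
  π.RowsLE m ∧ π.ColsLE n ∧ π.EntriesLE n ∧
    ∀ v, 1 ≤ v → v ≤ n → π.colCount v = 1

/-! The smallest entry `1` of a strict tableau with filling `[n + 1]` occupies a bottom segment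
of a single column `c`. Let `b` be the row of its lowest cell. Deleting the `1`s and lowering the
other entries by one gives a strict tableau with filling `[n]`, and `c` can be recovered from it
and `b`: the columns left of `c` reach row `b` with entries `≥ 2`, so `c` is the first column of
height at most `b`. Conversely, `1` can be inserted into that column, for any row `b < m`. Hence
strict tableaux with filling `[n + 1]` correspond to pairs of a letter `b ∈ [m]` and a strict
tableau with filling `[n]`, and iterating reads a word off a strict tableau. -/

lemma Antitone.ne_zero_iff_lt_ncard {f : ℕ → ℕ} (hf : Antitone f) (h0 : ∃ k, f k = 0) (x : ℕ) :
    f x ≠ 0 ↔ x < {y | f y ≠ 0}.ncard := by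
  have hf0 : ∀ y, f y ≠ 0 ↔ y < Nat.find h0 := fun y =>
    ⟨fun hy => not_le.mp fun hle => hy (Nat.le_zero.mp (Nat.find_spec h0 ▸ hf hle)),
      fun hy => Nat.find_min h0 hy⟩
  rw [show {y | f y ≠ 0} = Set.Iio (Nat.find h0) from Set.ext hf0, Set.ncard_Iio_nat]
  exact hf0 x

namespace PlanePartition

@[ext] lemma ext {π ρ : PlanePartition} (h : π.entry = ρ.entry) : π = ρ := by
  cases π; cases ρ; cases h; rfl

lemma antitone_col (π : PlanePartition) (j : ℕ) : Antitone fun i => π.entry i j :=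
  antitone_nat_of_succ_le fun i => π.col_decr i j

lemma antitone_row (π : PlanePartition) (i : ℕ) : Antitone (π.entry i) :=
  antitone_nat_of_succ_le fun j => π.row_decr i j

lemma entry_anti (π : PlanePartition) {i i' j j' : ℕ} (hi : i ≤ i') (hj : j ≤ j') :
    π.entry i' j' ≤ π.entry i j :=
  (π.antitone_row i' hj).trans (π.antitone_col j hi)

lemma exists_entry_row_eq_zero (π : PlanePartition) (i : ℕ) : ∃ j, π.entry i j = 0 := by
  simpa using (π.finite_support.preimage (Prod.mk_right_injective i).injOn).exists_notMem

lemma exists_entry_col_eq_zero (π : PlanePartition) (j : ℕ) : ∃ i, π.entry i j = 0 := by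
  simpa using (π.finite_support.preimage (Prod.mk_left_injective j).injOn).exists_notMem

noncomputable def colLen (π : PlanePartition) (j : ℕ) : ℕ := {i | π.entry i j ≠ 0}.ncard

lemma entry_ne_zero_iff_lt_rowLen (π : PlanePartition) (i j : ℕ) :
    π.entry i j ≠ 0 ↔ j < π.rowLen i :=
  (π.antitone_row i).ne_zero_iff_lt_ncard (π.exists_entry_row_eq_zero i) j

lemma entry_ne_zero_iff_lt_colLen (π : PlanePartition) (i j : ℕ) :
    π.entry i j ≠ 0 ↔ i < π.colLen j :=
  (π.antitone_col j).ne_zero_iff_lt_ncard (π.exists_entry_col_eq_zero j) i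

lemma entry_rowLen (π : PlanePartition) (i : ℕ) : π.entry i (π.rowLen i) = 0 :=
  not_not.mp fun h => ((π.entry_ne_zero_iff_lt_rowLen i _).mp h).false

lemma rowLen_eq_of_forall {π : PlanePartition} {i k : ℕ} (h : ∀ j, π.entry i j ≠ 0 ↔ j < k) :
    π.rowLen i = k := by
  rw [rowLen, show {j | π.entry i j ≠ 0} = Set.Iio k from Set.ext h, Set.ncard_Iio_nat]

lemma colLen_eq_of_forall {π : PlanePartition} {j k : ℕ} (h : ∀ i, π.entry i j ≠ 0 ↔ i < k) :
    π.colLen j = k := by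
  rw [colLen, show {i | π.entry i j ≠ 0} = Set.Iio k from Set.ext h, Set.ncard_Iio_nat]

def subOne (π : PlanePartition) : PlanePartition where
  entry i j := π.entry i j - 1
  row_decr i j := Nat.sub_le_sub_right (π.row_decr i j) 1
  col_decr i j := Nat.sub_le_sub_right (π.col_decr i j) 1
  finite_support := π.finite_support.subset fun _ hp => by
    simp only [Set.mem_ofPred_eq] at hp ⊢; omega

@[simp] lemma subOne_entry (π : PlanePartition) (i j : ℕ) :
    π.subOne.entry i j = π.entry i j - 1 := rfl

lemma colCount_subOne (π : PlanePartition) {v : ℕ} (hv : v ≠ 0) :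
    π.subOne.colCount v = π.colCount (v + 1) := by
  unfold colCount
  congr 1
  ext j
  exact exists_congr fun i => by simp only [subOne_entry]; omega

/-- Raise every entry by one and put `1` into the empty cells of rows `0, …, b` of column
`π.rowLen b`, the first column of height at most `b`. -/
noncomputable def insertOne (π : PlanePartition) (b : ℕ) : PlanePartition where
  entry i j :=
    if π.entry i j ≠ 0 then π.entry i j + 1
    else if j = π.rowLen b ∧ i ≤ b then 1 else 0
  row_decr i j := by
    have := π.row_decr i j
    have := (π.entry_ne_zero_iff_lt_rowLen b j).mpr
    have : i ≤ b → π.entry b j ≤ π.entry i j := fun h => π.entry_anti h le_rfl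
    split_ifs <;> omega
  col_decr i j := by
    have := π.col_decr i j
    split_ifs <;> omega
  finite_support := by
    refine (π.finite_support.union ((Set.finite_Iic b).prod
      (Set.finite_singleton (π.rowLen b)))).subset fun p hp => ?_
    simp only [Set.mem_ofPred_eq, Set.mem_union, Set.mem_prod, Set.mem_Iic,
      Set.mem_singleton_iff] at hp ⊢
    split_ifs at hp <;> tauto

lemma insertOne_entry (π : PlanePartition) (b i j : ℕ) :
    (π.insertOne b).entry i j =
      if π.entry i j ≠ 0 then π.entry i j + 1
      else if j = π.rowLen b ∧ i ≤ b then 1 else 0 := rfl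

lemma subOne_insertOne (π : PlanePartition) (b : ℕ) : (π.insertOne b).subOne = π := by
  ext i j
  simp only [subOne_entry, insertOne_entry]
  split_ifs <;> omega

lemma setOf_insertOne_eq_one (π : PlanePartition) (b : ℕ) :
    {j | ∃ i, (π.insertOne b).entry i j = 1} = {π.rowLen b} := by
  have hb := π.entry_rowLen b
  ext j
  simp only [Set.mem_ofPred_eq, Set.mem_singleton_iff, insertOne_entry]
  constructor
  · rintro ⟨i, hi⟩
    split_ifs at hi <;> omega
  · rintro rfl
    exact ⟨b, by simp [hb]⟩

noncomputable def colOfOne (π : PlanePartition) : ℕ := sInf {j | ∃ i, π.entry i j = 1}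

noncomputable def bottomRowOfOne (π : PlanePartition) : ℕ := π.colLen π.colOfOne - 1

lemma bottomRowOfOne_insertOne (π : PlanePartition) (b : ℕ) :
    (π.insertOne b).bottomRowOfOne = b := by
  have hcol : (π.insertOne b).colOfOne = π.rowLen b := by
    rw [colOfOne, setOf_insertOne_eq_one, csInf_singleton]
  suffices (π.insertOne b).colLen (π.rowLen b) = b + 1 by
    rw [bottomRowOfOne, hcol, this, Nat.add_sub_cancel]
  refine colLen_eq_of_forall fun i => ?_
  have : b ≤ i → π.entry i (π.rowLen b) ≤ π.entry b (π.rowLen b) := fun h =>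
    π.entry_anti h le_rfl
  have := π.entry_rowLen b
  simp only [insertOne_entry, true_and]
  split_ifs <;> omega

def empty : PlanePartition where
  entry _ _ := 0
  row_decr _ _ := le_rfl
  col_decr _ _ := le_rfl
  finite_support := by simp

end PlanePartition

namespace IsStrictTableau

open PlanePartition

variable {π : PlanePartition} {n m : ℕ}

lemma col_eq_of_entry_eq (h : IsStrictTableau π n m) {i j i' j' : ℕ} (h0 : π.entry i j ≠ 0)
    (he : π.entry i j = π.entry i' j') : j = j' := by
  obtain ⟨c, hc⟩ := Set.ncard_eq_one.mp (h.2.2.2 _ (Nat.one_le_iff_ne_zero.mpr h0) (h.2.2.1 i j))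
  have hj : j ∈ {k | ∃ l, π.entry l k = π.entry i j} := ⟨i, rfl⟩
  have hj' : j' ∈ {k | ∃ l, π.entry l k = π.entry i j} := ⟨i', he.symm⟩
  rw [hc] at hj hj'
  exact hj.trans hj'.symm

/-- Equal entries lie in one column, so the nonzero part of each row strictly decreases. -/
lemma entry_add_le (h : IsStrictTableau π n m) {i j : ℕ} (h0 : π.entry i j ≠ 0) :
    π.entry i j + j ≤ n := by
  induction j with
  | zero => exact h.2.2.1 i 0
  | succ j ih =>
    have hle := π.row_decr i j
    have hne : π.entry i (j + 1) ≠ π.entry i j := fun he => by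
      have := h.col_eq_of_entry_eq h0 he
      omega
    have := ih (by omega)
    omega

lemma subOne (h : IsStrictTableau π (n + 1) m) : IsStrictTableau π.subOne n m := by
  refine ⟨fun i j hi => ?_, fun i j hj => ?_, fun i j => ?_, fun v hv1 hvn => ?_⟩
  · simp [h.1 i j hi]
  · have := h.entry_add_le (i := i) (j := j)
    simp only [subOne_entry]
    omega
  · have := h.2.2.1 i j
    simp only [subOne_entry]
    omega
  · rw [π.colCount_subOne (by omega)]
    exact h.2.2.2 _ (by omega) (by omega)

lemma insertOne (h : IsStrictTableau π n m) {b : ℕ} (hb : b < m) :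
    IsStrictTableau (π.insertOne b) (n + 1) m := by
  obtain ⟨hr, hc, he, hcc⟩ := h
  have hlen : π.rowLen b ≤ n := not_lt.mp fun hlt =>
    (π.entry_ne_zero_iff_lt_rowLen b n).mpr hlt (hc b n le_rfl)
  refine ⟨fun i j hi => ?_, fun i j hj => ?_, fun i j => ?_, fun v hv1 hvn => ?_⟩
  · have := hr i j (by omega)
    simp only [insertOne_entry]
    split_ifs <;> omega
  · have := hc i j (by omega)
    simp only [insertOne_entry]
    split_ifs <;> omega
  · have := he i j
    simp only [insertOne_entry]
    split_ifs <;> omega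
  · obtain _ | _ | v := v
    · omega
    · rw [colCount, setOf_insertOne_eq_one, Set.ncard_singleton]
    · rw [← colCount_subOne _ v.succ_ne_zero, subOne_insertOne]
      exact hcc _ (by omega) (by omega)

lemma setOf_entry_eq_one (h : IsStrictTableau π (n + 1) m) :
    {j | ∃ i, π.entry i j = 1} = {π.colOfOne} := by
  obtain ⟨c, hc⟩ := Set.ncard_eq_one.mp (h.2.2.2 1 le_rfl (by omega))
  rw [colOfOne, hc, csInf_singleton]

lemma col_eq_colOfOne (h : IsStrictTableau π (n + 1) m) {i j : ℕ} (hij : π.entry i j = 1) :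
    j = π.colOfOne := by
  have : j ∈ {j | ∃ i, π.entry i j = 1} := ⟨i, hij⟩
  rwa [h.setOf_entry_eq_one] at this

lemma entry_bottomRowOfOne (h : IsStrictTableau π (n + 1) m) :
    π.entry π.bottomRowOfOne π.colOfOne = 1 := by
  obtain ⟨i, hi⟩ : π.colOfOne ∈ {j | ∃ i, π.entry i j = 1} := h.setOf_entry_eq_one ▸ rfl
  have hi' := (π.entry_ne_zero_iff_lt_colLen i π.colOfOne).mp (by omega)
  have hb := (π.entry_ne_zero_iff_lt_colLen π.bottomRowOfOne π.colOfOne).mpr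
    (by rw [bottomRowOfOne]; omega)
  have := π.entry_anti (show i ≤ π.bottomRowOfOne by rw [bottomRowOfOne]; omega)
    (le_refl π.colOfOne)
  omega

lemma bottomRowOfOne_lt (h : IsStrictTableau π (n + 1) m) : π.bottomRowOfOne < m := by
  by_contra hle
  have := h.1 _ π.colOfOne (not_lt.mp hle)
  have := h.entry_bottomRowOfOne
  omega

lemma entry_eq_one_iff (h : IsStrictTableau π (n + 1) m) {i j : ℕ} (hle : π.entry i j ≤ 1) :
    π.entry i j = 1 ↔ j = π.colOfOne ∧ i ≤ π.bottomRowOfOne := by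
  constructor
  · intro h1
    obtain rfl := h.col_eq_colOfOne h1
    have := (π.entry_ne_zero_iff_lt_colLen i π.colOfOne).mp (by omega)
    exact ⟨rfl, by rw [bottomRowOfOne]; omega⟩
  · rintro ⟨rfl, hi⟩
    have := π.entry_anti hi (le_refl π.colOfOne)
    have := h.entry_bottomRowOfOne
    omega

lemma rowLen_subOne_bottomRowOfOne (h : IsStrictTableau π (n + 1) m) :
    π.subOne.rowLen π.bottomRowOfOne = π.colOfOne := by
  refine rowLen_eq_of_forall fun j => ?_
  have h1 := h.entry_bottomRowOfOne
  have hright : π.colOfOne ≤ j → π.entry π.bottomRowOfOne j ≤ 1 := fun hj =>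
    h1 ▸ π.entry_anti le_rfl hj
  have hleft : j < π.colOfOne → 1 ≤ π.entry π.bottomRowOfOne j := fun hj =>
    h1 ▸ π.entry_anti le_rfl hj.le
  have hcol : π.entry π.bottomRowOfOne j = 1 → j = π.colOfOne := h.col_eq_colOfOne
  simp only [subOne_entry]
  omega

lemma insertOne_subOne (h : IsStrictTableau π (n + 1) m) :
    π.subOne.insertOne π.bottomRowOfOne = π := by
  ext i j
  have := h.entry_eq_one_iff (i := i) (j := j)
  simp only [insertOne_entry, subOne_entry, h.rowLen_subOne_bottomRowOfOne]
  split_ifs <;> omega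

lemma eq_empty (h : IsStrictTableau π 0 m) : π = PlanePartition.empty := by
  ext i j
  exact h.2.1 i j (Nat.zero_le j)

end IsStrictTableau

open PlanePartition in
noncomputable def strictTableauSuccEquiv (n m : ℕ) :
    {π : PlanePartition // IsStrictTableau π (n + 1) m} ≃
      Fin m × {π : PlanePartition // IsStrictTableau π n m} where
  toFun π := (⟨π.1.bottomRowOfOne, π.2.bottomRowOfOne_lt⟩, ⟨π.1.subOne, π.2.subOne⟩)
  invFun p := ⟨p.2.1.insertOne p.1, p.2.2.insertOne p.1.isLt⟩
  left_inv π := Subtype.ext π.2.insertOne_subOne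
  right_inv _ := Prod.ext (Fin.ext (bottomRowOfOne_insertOne _ _))
    (Subtype.ext (subOne_insertOne _ _))

lemma isStrictTableau_empty (m : ℕ) : IsStrictTableau PlanePartition.empty 0 m :=
  ⟨fun _ _ _ => rfl, fun _ _ _ => rfl, fun _ _ => le_rfl, fun _ h1 h0 => absurd h1 (by omega)⟩

noncomputable def wordEquivStrictTableau (m : ℕ) :
    (n : ℕ) → (Fin n → Fin m) ≃ {π : PlanePartition // IsStrictTableau π n m}
  | 0 =>
    haveI : Subsingleton {π : PlanePartition // IsStrictTableau π 0 m} :=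
      ⟨fun π ρ => Subtype.ext (π.2.eq_empty.trans ρ.2.eq_empty.symm)⟩
    equivOfSubsingletonOfSubsingleton
      (fun _ => ⟨PlanePartition.empty, isStrictTableau_empty m⟩) (fun _ => finZeroElim)
  | n + 1 => (Fin.consEquiv fun _ => Fin m).symm.trans
      (((Equiv.refl (Fin m)).prodCongr (wordEquivStrictTableau m n)).trans
        (strictTableauSuccEquiv n m).symm)

/-- There is a bijection between words of length `n` over the
alphabet `[m]` and strict tableaux with filling `[n]` and shape contained in the
`n × m` rectangle. -/
theorem words_equiv_strict_tableaux (n m : ℕ) :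
    Nonempty ((Fin n → Fin m) ≃ {π : PlanePartition // IsStrictTableau π n m}) :=
  ⟨wordEquivStrictTableau m n⟩
end
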